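/- arXiv:1311.2973 — 2 statements merged into one kernel-verified Lean document; each statement's English description precedes it below -/
import Mathlib

section
/- Let L be a bounded distributive lattice, let PF(L) denote the set of prime filters of L, and define i : L → Set (PF(L)) by i(x) = {F | x ∈ F}. Let f : L → L be a unary join-hemimorphism, and define f̄ : Set (PF(L)) → Set (PF(L)) by f̄(U) = {F | ∃ G ∈ U, ∀ a ∈ G, f a ∈ F}. Then: (1) i is an injective bounded-lattice homomorphism, i.e., i(x ⊓ y) = i(x) ∩ i(y), i(x ⊔ y) = i(x) ∪ i(y), i(⊥) = ∅, i(⊤) = PF(L), and i(x) = i(y) implies x = y; (2) i(f(x)) = f̄(i(x)) for every x ∈ L: a prime filter F contains f(x) if and only if there exists a prime filter G with x ∈ G and f a ∈ F for every a ∈ G. -/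
/-!
The complement of a prime ideal is a prime filter, so the prime ideal theorem separates a filter
from a disjoint ideal by a prime filter. Separating `↑x` from `↓y` when `x ≰ y` shows that the
Stone map reflects `≤`, hence is injective. If `f x ∈ F`, the set `{a | f a ∉ F}` is an ideal,
since `f` preserves `⊥` and `⊔` and `F` is prime; it is disjoint from `↑x`, so a prime filter
`G ⊇ ↑x` avoiding it witnesses `F ∈ f̄ (i x)`.
-/

/-- A prime filter of a bounded distributive lattice. -/
def IsPrimeFilter {L : Type*} [DistribLattice L] [BoundedOrder L] (F : Set L) : Prop :=
  ⊤ ∈ F ∧ ⊥ ∉ F ∧ (∀ x y : L, x ∈ F → x ≤ y → y ∈ F) ∧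
    (∀ x y : L, x ∈ F → y ∈ F → x ⊓ y ∈ F) ∧
    (∀ x y : L, x ⊔ y ∈ F → x ∈ F ∨ y ∈ F)

/-- The set of prime filters of `L`. -/
def PF (L : Type*) [DistribLattice L] [BoundedOrder L] : Type _ :=
  {F : Set L // IsPrimeFilter F}

/-- The Stone embedding `i : L → Set (PF L)`, `i x = {F | x ∈ F}`. -/
def stoneMap (L : Type*) [DistribLattice L] [BoundedOrder L] (x : L) : Set (PF L) :=
  {F | x ∈ F.1}

/-- The canonical extension of a unary operation `f` to the powerset of prime filters. -/
def fBar {L : Type*} [DistribLattice L] [BoundedOrder L] (f : L → L)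
    (U : Set (PF L)) : Set (PF L) :=
  {F | ∃ G ∈ U, ∀ a ∈ G.1, f a ∈ F.1}

namespace IsPrimeFilter

variable {L : Type*} [DistribLattice L] [BoundedOrder L] {F : Set L}

lemma top_mem (hF : IsPrimeFilter F) : ⊤ ∈ F := hF.1

lemma bot_notMem (hF : IsPrimeFilter F) : ⊥ ∉ F := hF.2.1

lemma mem_of_le (hF : IsPrimeFilter F) {x y : L} (hx : x ∈ F) (hxy : x ≤ y) : y ∈ F :=
  hF.2.2.1 x y hx hxy

lemma inf_mem_iff (hF : IsPrimeFilter F) {x y : L} : x ⊓ y ∈ F ↔ x ∈ F ∧ y ∈ F :=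
  ⟨fun h => ⟨hF.mem_of_le h inf_le_left, hF.mem_of_le h inf_le_right⟩,
    fun h => hF.2.2.2.1 x y h.1 h.2⟩

lemma sup_mem_iff (hF : IsPrimeFilter F) {x y : L} : x ⊔ y ∈ F ↔ x ∈ F ∨ y ∈ F :=
  ⟨hF.2.2.2.2 x y, fun h => h.elim (hF.mem_of_le · le_sup_left) (hF.mem_of_le · le_sup_right)⟩

lemma compl_of_isPrime {I : Order.Ideal L} (hI : I.IsPrime) : IsPrimeFilter (I : Set L)ᶜ :=
  ⟨hI.top_notMem, fun h => h I.bot_mem, fun _ _ hx hxy hy => hx (I.lower hxy hy),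
    fun _ _ hx hy hxy => (hI.mem_or_mem hxy).elim hx hy,
    fun _ _ hxy => not_and_or.mp fun h => hxy (I.sup_mem h.1 h.2)⟩

end IsPrimeFilter

section SupBotHom

variable {L M : Type*} [SemilatticeSup L] [OrderBot L] [DistribLattice M] [BoundedOrder M]

lemma isIdeal_preimage_compl_of_isPrimeFilter (f : SupBotHom L M) {F : Set M}
    (hF : IsPrimeFilter F) : Order.IsIdeal (f ⁻¹' Fᶜ) where
  IsLowerSet _ _ hba ha hb := ha (hF.mem_of_le hb (OrderHomClass.mono f hba))
  Nonempty := ⟨⊥, by simpa using hF.bot_notMem⟩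
  Directed a ha b hb := ⟨a ⊔ b, by simpa [map_sup, hF.sup_mem_iff] using ⟨ha, hb⟩,
    le_sup_left, le_sup_right⟩

end SupBotHom

section StoneMap

variable {L : Type*} [DistribLattice L] [BoundedOrder L]

lemma exists_primeFilter_of_disjoint {F : Order.PFilter L} {I : Order.Ideal L}
    (h : Disjoint (F : Set L) I) : ∃ G : PF L, (F : Set L) ⊆ G.1 ∧ Disjoint G.1 (I : Set L) := by
  obtain ⟨J, hJ, hIJ, hFJ⟩ := DistribLattice.prime_ideal_of_disjoint_filter_ideal h
  exact ⟨⟨_, IsPrimeFilter.compl_of_isPrime hJ⟩, Set.subset_compl_iff_disjoint_right.mpr hFJ,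
    disjoint_compl_left.mono_right hIJ⟩

lemma exists_primeFilter_mem_notMem {x y : L} (h : ¬x ≤ y) :
    ∃ G : PF L, x ∈ G.1 ∧ y ∉ G.1 := by
  have hdisj : Disjoint (Order.PFilter.principal x : Set L) (Order.Ideal.principal y : Set L) :=
    Set.disjoint_left.mpr fun _ hx hy => h (le_trans hx hy)
  obtain ⟨G, hxG, hGy⟩ := exists_primeFilter_of_disjoint hdisj
  exact ⟨G, hxG le_rfl, fun hy => Set.disjoint_left.mp hGy hy le_rfl⟩

lemma stoneMap_inf (x y : L) : stoneMap L (x ⊓ y) = stoneMap L x ∩ stoneMap L y :=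
  Set.ext fun F => F.2.inf_mem_iff

lemma stoneMap_sup (x y : L) : stoneMap L (x ⊔ y) = stoneMap L x ∪ stoneMap L y :=
  Set.ext fun F => F.2.sup_mem_iff

lemma stoneMap_bot : stoneMap L ⊥ = ∅ :=
  Set.eq_empty_of_forall_notMem fun F => F.2.bot_notMem

lemma stoneMap_top : stoneMap L ⊤ = Set.univ :=
  Set.eq_univ_of_forall fun F => F.2.top_mem

lemma stoneMap_subset_stoneMap_iff {x y : L} : stoneMap L x ⊆ stoneMap L y ↔ x ≤ y := by
  refine ⟨fun hxy => ?_, fun hxy F hx => F.2.mem_of_le hx hxy⟩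
  by_contra h
  obtain ⟨G, hxG, hyG⟩ := exists_primeFilter_mem_notMem h
  exact hyG (hxy hxG)

lemma stoneMap_injective : Function.Injective (stoneMap L) := fun _ _ h =>
  le_antisymm (stoneMap_subset_stoneMap_iff.mp h.le) (stoneMap_subset_stoneMap_iff.mp h.ge)

lemma stoneMap_map_eq_fBar (f : SupBotHom L L) (x : L) :
    stoneMap L (f x) = fBar f (stoneMap L x) := by
  ext F
  refine ⟨fun hfx => ?_, fun ⟨G, hxG, hG⟩ => hG x hxG⟩
  let J := (isIdeal_preimage_compl_of_isPrimeFilter f F.2).toIdeal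
  have hdisj : Disjoint (Order.PFilter.principal x : Set L) (J : Set L) :=
    Set.disjoint_left.mpr fun _ hxa hfa => hfa (F.2.mem_of_le hfx (OrderHomClass.mono f hxa))
  obtain ⟨G, hxG, hGJ⟩ := exists_primeFilter_of_disjoint hdisj
  exact ⟨G, hxG le_rfl, fun a ha => not_not.mp (Set.disjoint_left.mp hGJ ha)⟩

end StoneMap

theorem stmt_18 {L : Type*} [DistribLattice L] [BoundedOrder L]
    (f : L → L) (hf : (∀ x y : L, f (x ⊔ y) = f x ⊔ f y) ∧ f ⊥ = ⊥) :
    ((∀ x y : L, stoneMap L (x ⊓ y) = stoneMap L x ∩ stoneMap L y) ∧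
     (∀ x y : L, stoneMap L (x ⊔ y) = stoneMap L x ∪ stoneMap L y) ∧
     stoneMap L ⊥ = (∅ : Set (PF L)) ∧
     stoneMap L ⊤ = (Set.univ : Set (PF L)) ∧
     Function.Injective (stoneMap L)) ∧
    (∀ x : L, stoneMap L (f x) = fBar f (stoneMap L x)) :=
  ⟨⟨stoneMap_inf, stoneMap_sup, stoneMap_bot, stoneMap_top, stoneMap_injective⟩,
    stoneMap_map_eq_fBar ⟨⟨f, hf.1⟩, hf.2⟩⟩
end

section
/- Let L be a bounded distributive lattice, let PF(L) denote the set of prime filters of L, and for a map f : L → L define f̄ : Set (PF(L)) → Set (PF(L)) by f̄(U) = {F | ∃ G ∈ U, ∀ a ∈ G, f a ∈ F}. Let f₁, f₂, f be unary join-hemimorphisms on L. Then: (1) if f₁(x) ≤ f(x) for all x ∈ L, then f̄₁(U) ⊆ f̄(U) for every set U of prime filters of L; (2) if f₂(f₁(x)) ≤ f(x) for all x ∈ L, then f̄₂(f̄₁(U)) ⊆ f̄(U) for every set U of prime filters of L. (The role-inclusion axioms r₁ ⊑ r and r₁ ∘ r₂ ⊑ r, in their algebraic form, are preserved when passing from L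 to the powerset algebra over its prime filters with the canonically defined operators.) -/
/-- A unary join-hemimorphism. -/
def IsJoinHemi {L : Type*} [DistribLattice L] [BoundedOrder L] (f : L → L) : Prop :=
  (∀ x y : L, f (x ⊔ y) = f x ⊔ f y) ∧ f ⊥ = ⊥

theorem IsPrimeFilter.mem_of_le_s19 {L : Type*} [DistribLattice L] [BoundedOrder L] {F : Set L}
    (hF : IsPrimeFilter F) {x y : L} (hx : x ∈ F) (hxy : x ≤ y) : y ∈ F :=
  hF.2.2.1 x y hx hxy

section fBar

variable {L : Type*} [DistribLattice L] [BoundedOrder L]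

theorem fBar_mono_left {f g : L → L} (hfg : f ≤ g) (U : Set (PF L)) :
    fBar f U ⊆ fBar g U := by
  rintro F ⟨G, hG, hGF⟩
  exact ⟨G, hG, fun a ha => F.2.mem_of_le_s19 (hGF a ha) (hfg a)⟩

theorem fBar_fBar_subset_fBar_comp (f g : L → L) (U : Set (PF L)) :
    fBar g (fBar f U) ⊆ fBar (g ∘ f) U := by
  rintro F ⟨H, ⟨G, hG, hGH⟩, hHF⟩
  exact ⟨G, hG, fun a ha => hHF (f a) (hGH a ha)⟩

end fBar

theorem stmt_19_general {L : Type*} [DistribLattice L] [BoundedOrder L]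
    (f₁ f₂ f : L → L) :
    ((∀ x : L, f₁ x ≤ f x) → ∀ U : Set (PF L), fBar f₁ U ⊆ fBar f U) ∧
    ((∀ x : L, f₂ (f₁ x) ≤ f x) → ∀ U : Set (PF L), fBar f₂ (fBar f₁ U) ⊆ fBar f U) :=
  ⟨fun h U => fBar_mono_left h U,
    fun h U => (fBar_fBar_subset_fBar_comp f₁ f₂ U).trans (fBar_mono_left h U)⟩

theorem stmt_19 {L : Type*} [DistribLattice L] [BoundedOrder L]
    (f₁ f₂ f : L → L)
    (hf₁ : IsJoinHemi f₁) (hf₂ : IsJoinHemi f₂) (hf : IsJoinHemi f) :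
    ((∀ x : L, f₁ x ≤ f x) → ∀ U : Set (PF L), fBar f₁ U ⊆ fBar f U) ∧
    ((∀ x : L, f₂ (f₁ x) ≤ f x) → ∀ U : Set (PF L), fBar f₂ (fBar f₁ U) ⊆ fBar f U) :=
  stmt_19_general f₁ f₂ f
end
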